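/- Let (R, m, k) be a d-dimensional reduced F-finite Noetherian local ring of characteristic p > 0 and let I_e = { r ∈ R : φ(F^e_* r) ∈ m for all φ ∈ Hom_R(F^e_* R, R) }. Then the sequence ( p^{−ed}·e_HK(I_e; R) )_{e∈ℕ} is non-increasing; in particular it converges. -/

import Mathlib

set_option linter.unusedVariables false

open Filter IsLocalRing

/-- `I^[q]` : the ideal generated by the `q`-th powers of the elements of `I`. -/
def Ideal.bracketPow {R : Type*} [CommSemiring R] (I : Ideal R) (q : ℕ) : Ideal R :=
  Ideal.span ((fun x => x ^ q) '' (I : Set R))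

/-- The length of the `R`-module `M` (as a natural number; junk value when infinite),
computed as the Krull dimension of the lattice of submodules of `M`. -/
noncomputable def mlength (R M : Type*) [Ring R] [AddCommGroup M] [Module R M] : ℕ :=
  ((Order.krullDim (Submodule R M)).unbotD 0).toNat

/-- The length of `(R ⧸ I) ⊗_R M`. -/
noncomputable def lenTensor (R : Type*) [CommRing R] (M : Type*) [AddCommGroup M] [Module R M]
    (I : Ideal R) : ℕ :=
  mlength R (TensorProduct R (R ⧸ I) M)

/-- Type synonym: `M` viewed as an `R`-module via the `e`-th iterate of Frobenius,
i.e. `F^e_* M`. -/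
def FrobMod (R : Type*) (p e : ℕ) (M : Type*) : Type _ := M

/-- `F^e_* m`, the element of `F^e_* M` corresponding to `m : M`. -/
def FrobMod.of (R : Type*) (p e : ℕ) {M : Type*} (m : M) : FrobMod R p e M := m

instance FrobMod.instAddCommGroup {R M : Type*} {p e : ℕ} [AddCommGroup M] :
    AddCommGroup (FrobMod R p e M) := inferInstanceAs (AddCommGroup M)

noncomputable instance FrobMod.instModule {R : Type*} [CommSemiring R] {p e : ℕ} [ExpChar R p]
    {M : Type*} [AddCommGroup M] [Module R M] : Module R (FrobMod R p e M) :=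
  Module.compHom M (iterateFrobenius R p e)

/-- `M` has a free direct summand (isomorphic to `R`). -/
def HasFreeDirectSummand (R M : Type*) [CommRing R] [AddCommGroup M] [Module R M] : Prop :=
  ∃ N N' : Submodule R M, IsCompl N N' ∧ Nonempty (N ≃ₗ[R] R)

/-- `R` is `F`-finite: the Frobenius endomorphism is a finite ring homomorphism,
i.e. `F_* R` is a finitely generated `R`-module. -/
def FFinite (R : Type*) [CommRing R] (p : ℕ) [ExpChar R p] : Prop :=
  RingHom.Finite (frobenius R p)

/-- The set `I_e = { r : R | φ (F^e_* r) ∈ 𝔪 for all φ ∈ Hom_R (F^e_* R, R) }`. -/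
def splittingSet (R : Type*) [CommRing R] [IsLocalRing R] (p e : ℕ) [ExpChar R p] : Set R :=
  {r : R | ∀ φ : FrobMod R p e R →ₗ[R] R, φ (FrobMod.of R p e r) ∈ maximalIdeal R}

/-- `α = α(R) = log_p [k : k^p]`, encoded as `[k^{1/p} : k] = p ^ α` for the residue field `k`. -/
def IsAlphaOf (R : Type*) [CommRing R] [IsLocalRing R] (p : ℕ)
    [ExpChar (ResidueField R) p] (α : ℕ) : Prop :=
  Module.finrank (ResidueField R) (FrobMod (ResidueField R) p 1 (ResidueField R)) = p ^ α

/-- `b` records, for each `e`, a direct sum decomposition `F^e_* M ≅ R^{b e} ⊕ N_e`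
where `N_e` has no free direct summand; i.e. `b e` is the `e`-th Frobenius splitting
number of `M`. -/
def IsFrobSplittingNumbersOf (R : Type*) [CommRing R] (p : ℕ) [ExpChar R p]
    (M : Type*) [AddCommGroup M] [Module R M] (b : ℕ → ℕ) : Prop :=
  ∀ e : ℕ, ∃ Fe Ne : Submodule R (FrobMod R p e M),
    IsCompl Fe Ne ∧ Nonempty (Fe ≃ₗ[R] (Fin (b e) → R)) ∧ ¬ HasFreeDirectSummand R Ne

/-- `a e` is the `e`-th Frobenius splitting number of `R`:
`F^e_* R ≅ R^{a e} ⊕ M_e` with `M_e` having no free direct summand. -/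
def IsFrobSplittingNumbers (R : Type*) [CommRing R] (p : ℕ) [ExpChar R p] (a : ℕ → ℕ) : Prop :=
  IsFrobSplittingNumbersOf R p R a

/-- A local ring is regular if its maximal ideal is generated by `dim R` elements. -/
def RegularLocal (R : Type*) [CommRing R] [IsLocalRing R] : Prop :=
  ∃ s : Finset R, Ideal.span (s : Set R) = maximalIdeal R ∧
    (s.card : WithBot (WithTop ℕ)) = ringKrullDim R

/-- A local ring is Cohen–Macaulay if there is a regular sequence in the maximal ideal
of length `dim R`. -/
def CohenMacaulayLocal (R : Type*) [CommRing R] [IsLocalRing R] : Prop :=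
  ∃ rs : List R, (∀ r ∈ rs, r ∈ maximalIdeal R) ∧ RingTheory.Sequence.IsRegular R rs ∧
    (rs.length : WithBot (WithTop ℕ)) = ringKrullDim R

/-- `R` is strongly `F`-regular: for every `c` not in any minimal prime there are `e`
and `φ : F^e_* R → R` with `φ (F^e_* c) = 1`. -/
def StronglyFRegular (R : Type*) [CommRing R] (p : ℕ) [ExpChar R p] : Prop :=
  ∀ c : R, (∀ P ∈ minimalPrimes R, c ∉ P) →
    ∃ (e : ℕ) (φ : FrobMod R p e R →ₗ[R] R), φ (FrobMod.of R p e c) = 1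

/-!
Precomposing `φ : F^{e+1}_* R → R` with the `R`-linear Frobenius `F^e_* R → F^{e+1}_* R` shows
`I_e^[p] ⊆ I_{e+1}`, hence `ℓ(R/I_{e+1}^[q]) ≤ ℓ(R/I_e^[pq])` for every `q = p^{e'}`. Dividing by
`q^d` and letting `e' → ∞` gives `e_HK(I_{e+1}) ≤ p^d e_HK(I_e)`. The comparison of lengths needs
`R/I_e^[q]` to have finite length (`mlength` is `0` otherwise), which holds because
`𝔪^[p^e] ⊆ I_e`.
-/

namespace FrobMod

variable {R : Type*} [CommRing R] {p : ℕ} [ExpChar R p]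

theorem smul_of (e : ℕ) (a r : R) : a • of R p e r = of R p e (a ^ p ^ e * r) := by
  change iterateFrobenius R p e a * r = _
  rw [iterateFrobenius_def]
  rfl

noncomputable def frobeniusLinearMap (e : ℕ) : FrobMod R p e R →ₗ[R] FrobMod R p (e + 1) R where
  toFun x := of R p (e + 1) (frobenius R p x)
  map_add' := map_add (frobenius R p)
  map_smul' a (x : R) := by
    change of R p (e + 1) (frobenius R p (a ^ p ^ e * x)) = a • of R p (e + 1) (frobenius R p x)
    rw [smul_of, map_mul, map_pow, frobenius_def, ← pow_mul, ← pow_succ']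

end FrobMod

section SplittingSet

variable {R : Type*} [CommRing R] [IsLocalRing R] {p : ℕ} [ExpChar R p]

theorem pow_mem_splittingSet_succ {e : ℕ} {r : R} (hr : r ∈ splittingSet R p e) :
    r ^ p ∈ splittingSet R p (e + 1) :=
  fun φ => hr (φ ∘ₗ FrobMod.frobeniusLinearMap e)

theorem pow_mem_splittingSet_of_mem_maximalIdeal (e : ℕ) {x : R} (hx : x ∈ maximalIdeal R) :
    x ^ p ^ e ∈ splittingSet R p e := by
  intro φ
  have hsmul : FrobMod.of R p e (x ^ p ^ e) = x • FrobMod.of R p e 1 := by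
    rw [FrobMod.smul_of, mul_one]
  rw [hsmul, map_smul, smul_eq_mul]
  exact Ideal.mul_mem_right _ _ hx

end SplittingSet

namespace Ideal

variable {R : Type*} [CommRing R]

theorem bracketPow_le_iff {I J : Ideal R} {q : ℕ} :
    I.bracketPow q ≤ J ↔ ∀ x ∈ I, x ^ q ∈ J := by
  rw [bracketPow, span_le, Set.image_subset_iff]
  rfl

theorem pow_mem_bracketPow {I : Ideal R} {x : R} (hx : x ∈ I) (q : ℕ) : x ^ q ∈ I.bracketPow q :=
  subset_span ⟨x, hx, rfl⟩

theorem bracketPow_mono {I J : Ideal R} (h : I ≤ J) (q : ℕ) : I.bracketPow q ≤ J.bracketPow q :=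
  bracketPow_le_iff.2 fun _ hx => pow_mem_bracketPow (h hx) q

theorem bracketPow_mul_le (I : Ideal R) (q q' : ℕ) :
    I.bracketPow (q * q') ≤ (I.bracketPow q).bracketPow q' :=
  bracketPow_le_iff.2 fun x hx => pow_mul x q q' ▸ pow_mem_bracketPow (pow_mem_bracketPow hx q) q'

theorem radical_le_radical_bracketPow (I : Ideal R) (q : ℕ) :
    I.radical ≤ (I.bracketPow q).radical := fun x ⟨n, hn⟩ =>
  ⟨n * q, pow_mul x n q ▸ pow_mem_bracketPow hn q⟩

end Ideal

section Length

variable {R : Type*} [CommRing R]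

theorem mlength_eq_toNat_length (M : Type*) [AddCommGroup M] [Module R M] :
    mlength R M = (Module.length R M).toNat := by
  rw [mlength, ← Module.coe_length, WithBot.unbotD_coe]

theorem lenTensor_self_eq_toNat_length (J : Ideal R) :
    lenTensor R R J = (Module.length R (R ⧸ J)).toNat := by
  rw [lenTensor, mlength_eq_toNat_length, (TensorProduct.rid R (R ⧸ J)).length_eq]

theorem isArtinianRing_quotient_of_maximalIdeal_le_radical [IsNoetherianRing R] [IsLocalRing R]
    {J : Ideal R} (hJ : maximalIdeal R ≤ J.radical) : IsArtinianRing (R ⧸ J) := by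
  have : Ring.KrullDimLE 0 (R ⧸ J) := by
    refine Ideal.krullDimLE_zero_quotient_iff_forall_minimalPrimes_isMaximal.2 fun P hP => ?_
    rw [le_antisymm (le_maximalIdeal hP.1.1.ne_top) (hJ.trans (hP.1.1.radical_le_iff.2 hP.1.2))]
    exact maximalIdeal.isMaximal R
  exact IsNoetherianRing.isArtinianRing_of_krullDimLE_zero

theorem length_quotient_ne_top_of_maximalIdeal_le_radical [IsNoetherianRing R] [IsLocalRing R]
    {J : Ideal R} (hJ : maximalIdeal R ≤ J.radical) : Module.length R (R ⧸ J) ≠ ⊤ := by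
  have := isArtinianRing_quotient_of_maximalIdeal_le_radical hJ
  have : IsArtinian R (R ⧸ J) :=
    isArtinian_of_surjective_algebraMap (Ideal.Quotient.mk_surjective (I := J))
  exact Module.length_ne_top

theorem toNat_length_quotient_le_of_le [IsNoetherianRing R] [IsLocalRing R] {J J' : Ideal R}
    (hJ : maximalIdeal R ≤ J.radical) (h : J ≤ J') :
    (Module.length R (R ⧸ J')).toNat ≤ (Module.length R (R ⧸ J)).toNat :=
  ENat.toNat_le_toNat
    (Module.length_le_of_surjective (Submodule.factor h) (Submodule.factor_surjective h))
    (length_quotient_ne_top_of_maximalIdeal_le_radical hJ)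

end Length

section Limits

open Topology

variable {r : ℝ}

theorem le_mul_of_tendsto_div_pow (hr : 0 < r) {f g : ℕ → ℝ} {a b : ℝ}
    (hf : Tendsto (fun n => f n / r ^ n) atTop (𝓝 a))
    (hg : Tendsto (fun n => g n / r ^ n) atTop (𝓝 b)) (hfg : ∀ n, f n ≤ g (n + 1)) :
    a ≤ r * b := by
  have hg' : Tendsto (fun n => g (n + 1) / r ^ n) atTop (𝓝 (r * b)) := by
    refine ((hg.comp (tendsto_add_atTop_nat 1)).const_mul r).congr fun n => ?_
    simp only [Function.comp_apply, pow_succ]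
    field_simp
  exact le_of_tendsto_of_tendsto' hf hg' fun n => by gcongr; exact hfg n

theorem antitone_div_pow_of_succ_le_mul (hr : 0 < r) {c : ℕ → ℝ} (h : ∀ n, c (n + 1) ≤ r * c n) :
    Antitone fun n => c n / r ^ n :=
  antitone_nat_of_succ_le fun n => calc
    c (n + 1) / r ^ (n + 1) ≤ r * c n / r ^ (n + 1) := by gcongr; exact h n
    _ = c n / r ^ n := by rw [pow_succ]; field_simp

end Limits

theorem statement10_general {R : Type*} [CommRing R] [IsNoetherianRing R] [IsLocalRing R]
    {p : ℕ} [Fact p.Prime] [CharP R p]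
    (d : ℕ)
    (Ie : ℕ → Ideal R) (hIe : ∀ e, (Ie e : Set R) = splittingSet R p e)
    (c : ℕ → ℝ)
    (hc : ∀ e, Tendsto
      (fun e' : ℕ => (lenTensor R R ((Ie e).bracketPow (p ^ e')) : ℝ) / (p : ℝ) ^ (e' * d))
      atTop (nhds (c e))) :
    Antitone (fun e : ℕ => c e / (p : ℝ) ^ (e * d)) ∧
    ∃ L : ℝ, Tendsto (fun e : ℕ => c e / (p : ℝ) ^ (e * d)) atTop (nhds L) := by
  have hr : (0 : ℝ) < (p : ℝ) ^ d := pow_pos (Nat.cast_pos.2 (Fact.out : p.Prime).pos) d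
  simp only [pow_mul'] at hc ⊢
  have hmem : ∀ e x, x ∈ Ie e ↔ x ∈ splittingSet R p e := fun e x => by rw [← hIe]; rfl
  have hsucc : ∀ e, (Ie e).bracketPow p ≤ Ie (e + 1) := fun e =>
    Ideal.bracketPow_le_iff.2 fun x hx =>
      (hmem _ _).2 (pow_mem_splittingSet_succ ((hmem e x).1 hx))
  have hrad : ∀ e, maximalIdeal R ≤ (Ie e).radical := fun e x hx =>
    ⟨p ^ e, (hmem e _).2 (pow_mem_splittingSet_of_mem_maximalIdeal e hx)⟩
  have hlen : ∀ e e', lenTensor R R ((Ie (e + 1)).bracketPow (p ^ e')) ≤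
      lenTensor R R ((Ie e).bracketPow (p ^ (e' + 1))) := fun e e' => by
    rw [lenTensor_self_eq_toNat_length, lenTensor_self_eq_toNat_length, pow_succ']
    exact toNat_length_quotient_le_of_le ((hrad e).trans ((Ie e).radical_le_radical_bracketPow _))
      (((Ie e).bracketPow_mul_le p _).trans (Ideal.bracketPow_mono (hsucc e) _))
  have hanti := antitone_div_pow_of_succ_le_mul hr fun e =>
    le_mul_of_tendsto_div_pow hr (hc (e + 1)) (hc e) fun e' => by exact_mod_cast hlen e e'
  refine ⟨hanti, _, tendsto_atTop_ciInf hanti ⟨0, ?_⟩⟩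
  rintro _ ⟨e, rfl⟩
  exact div_nonneg (ge_of_tendsto' (hc e) fun _ => by positivity) (by positivity)

/-- the sequence `p^{-ed} e_HK(I_e; R)` is non-increasing, hence converges. -/
theorem statement10 {R : Type*} [CommRing R] [IsNoetherianRing R] [IsLocalRing R] [IsReduced R]
    {p : ℕ} [Fact p.Prime] [CharP R p] (hfin : FFinite R p)
    (d : ℕ) (hd : ringKrullDim R = d)
    (Ie : ℕ → Ideal R) (hIe : ∀ e, (Ie e : Set R) = splittingSet R p e)
    (c : ℕ → ℝ)
    (hc : ∀ e, Tendsto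
      (fun e' : ℕ => (lenTensor R R ((Ie e).bracketPow (p ^ e')) : ℝ) / (p : ℝ) ^ (e' * d))
      atTop (nhds (c e))) :
    Antitone (fun e : ℕ => c e / (p : ℝ) ^ (e * d)) ∧
    ∃ L : ℝ, Tendsto (fun e : ℕ => c e / (p : ℝ) ^ (e * d)) atTop (nhds L) :=
  statement10_general d Ie hIe c hc
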